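/- Sigmoid shift-invariance of the additive decomposition: for reals a, b, a', b', if σ(a + b) = σ(a' + b') then a' − a = b − b'; consequently, the set of parameterizations (θ', γ') observationally equivalent to (θ, γ) on a set S of (q,d,k)-triples is exactly { (θ + Δ, γ − Δ∘k) : Δ : K → ℝ constant on each connected component of the position-sharing graph of S }. -/

import Mathlib

noncomputable def sigmoid (x : ℝ) : ℝ := 1 / (1 + Real.exp (-x))

/-- Positions `k` and `k'` are adjacent in the position-sharing graph of `S`
if some query-document pair is observed at both. -/
def sharesPair {Q D K : Type*} (S : Set (Q × D × K)) (k k' : K) : Prop :=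
  ∃ q d, (q, d, k) ∈ S ∧ (q, d, k') ∈ S

lemma sigmoid_inj : Function.Injective sigmoid := by
  intro a b h
  unfold sigmoid at h
  have ha : (0:ℝ) < 1 + Real.exp (-a) := by positivity
  have hb : (0:ℝ) < 1 + Real.exp (-b) := by positivity
  field_simp at h
  have := Real.exp_injective (add_left_cancel h)
  linarith

/-- Sigmoid shift-invariance: `σ(a+b) = σ(a'+b')` implies `a' − a = b − b'`;
consequently `(θ', γ')` is observationally equivalent to `(θ, γ)` on `S` iff
it arises from an offset function `Δ : K → ℝ` that is constant on each
connected component of the position-sharing graph of `S`, via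
`θ' = θ + Δ` and `γ' (q,d) = γ (q,d) − Δ k` for each observed `(q,d,k)`. -/
theorem stmt_12 {Q D K : Type*} (S : Set (Q × D × K))
    (θ θ' : K → ℝ) (γ γ' : Q × D → ℝ) :
    (∀ a b a' b' : ℝ, sigmoid (a + b) = sigmoid (a' + b') → a' - a = b - b') ∧
    ((∀ q d k, (q, d, k) ∈ S →
        sigmoid (θ k + γ (q, d)) = sigmoid (θ' k + γ' (q, d))) ↔
      ∃ Δ : K → ℝ,
        (∀ k k', Relation.ReflTransGen (sharesPair S) k k' → Δ k = Δ k') ∧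
        (∀ k, θ' k = θ k + Δ k) ∧
        (∀ q d k, (q, d, k) ∈ S → γ' (q, d) = γ (q, d) - Δ k)) := by
  have shift : ∀ a b a' b' : ℝ, sigmoid (a + b) = sigmoid (a' + b') → a' - a = b - b' := by
    intro a b a' b' h
    have := sigmoid_inj h
    linarith
  refine ⟨shift, ?_, ?_⟩
  · intro h
    refine ⟨fun k => θ' k - θ k, ?_, fun k => by ring, ?_⟩
    · intro k k' hrel
      induction hrel with
      | refl => rfl
      | tail _ hstep ih =>
        obtain ⟨q, d, h1, h2⟩ := hstep
        have e1 := shift _ _ _ _ (h q d _ h1)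
        have e2 := shift _ _ _ _ (h q d _ h2)
        dsimp only at ih ⊢
        linarith [ih]
    · intro q d k hk
      have := shift _ _ _ _ (h q d k hk)
      dsimp only
      linarith
  · rintro ⟨Δ, _, hθ, hγ⟩ q d k hk
    rw [hθ k, hγ q d k hk]
    ring_nf
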